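/- For every d ≥ 0 and every n ≥ 1, p_d(n) = Σ_{r=0}^{n-1} C(d, r) · (a_{n,r} + a_{n,r+1}); that is, the entries of the triangle B defined by p_d(n) = Σ_r C(d,r)·b_{n,r} satisfy b_{n,r} = a_{n,r} + a_{n,r+1}. -/

import Mathlib

/-!
A Ferrers diagram in `ℕ^k` whose support is a set `S` of `r` coordinates is the same thing as a
strict Ferrers diagram in `ℕ^r`, so `p_d(n) = ∑_r C(d+1, r) a_{n,r}`. Pascal's rule
`C(d+1, r) = C(d, r) + C(d, r-1)` regroups this sum as `∑_r C(d, r) (a_{n,r} + a_{n,r+1})`, and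
the sum stops at `r = n - 1` because a strict diagram in `ℕ^r` contains `μ_r`, which has
`r + 1` elements.
-/

/-- A Ferrers diagram in `ℕ^k`: a finite nonempty downward-closed subset of `Fin k → ℕ`. -/
def IsFerrers {k : ℕ} (F : Finset (Fin k → ℕ)) : Prop :=
  F.Nonempty ∧ ∀ a ∈ F, ∀ x : Fin k → ℕ, (∀ i, x i ≤ a i) → x ∈ F

/-- A Ferrers diagram is strict if every coordinate is used by some element. -/
def IsStrict {k : ℕ} (F : Finset (Fin k → ℕ)) : Prop :=
  ∀ i : Fin k, ∃ a ∈ F, a i ≠ 0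

/-- `numPart d n` = `p_d(n)`, the number of Ferrers diagrams in `ℕ^(d+1)` with `n` elements. -/
noncomputable def numPart (d n : ℕ) : ℕ :=
  Nat.card {F : Finset (Fin (d + 1) → ℕ) // IsFerrers F ∧ F.card = n}

/-- `Amat n r` = `a_{n,r}`, the number of strict Ferrers diagrams in `ℕ^r` with `n` elements. -/
noncomputable def Amat (n r : ℕ) : ℕ :=
  Nat.card {F : Finset (Fin r → ℕ) // IsFerrers F ∧ IsStrict F ∧ F.card = n}

/-- `mu r` = `μ_r = {0, e_1, …, e_r} ⊆ ℕ^r`. -/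
def mu (r : ℕ) : Finset (Fin r → ℕ) :=
  insert 0 (Finset.univ.image fun i => Pi.single i 1)

/-- The reduced dimension of a Ferrers diagram `F ⊆ ℕ^x` (containing `μ_x`): the number of
coordinates used by some element of `F \ μ_x`. -/
noncomputable def rdim {x : ℕ} (F : Finset (Fin x → ℕ)) : ℕ :=
  Nat.card {i : Fin x // ∃ a ∈ F \ mu x, a i ≠ 0}

/-- Two coordinates are touched by a common element of the skew diagram `σ`. -/
def Touches {x : ℕ} (σ : Finset (Fin x → ℕ)) (i j : Fin x) : Prop :=
  ∃ a ∈ σ, a i ≠ 0 ∧ a j ≠ 0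

/-- `B` is a block of the finest partition of `Fin x` compatible with `σ`,
i.e. an equivalence class of the equivalence relation generated by `Touches σ`. -/
def IsBlock {x : ℕ} (σ : Finset (Fin x → ℕ)) (B : Set (Fin x)) : Prop :=
  ∃ i : Fin x, B = {j | Relation.EqvGen (Touches σ) i j}

/-- The support of `a` is contained in `B`. -/
def SuppIn {x : ℕ} (a : Fin x → ℕ) (B : Set (Fin x)) : Prop :=
  ∀ i, a i ≠ 0 → i ∈ B

/-- The component of `σ` with block `B` is of type `σ₂`: `B = {i, j}` with `i ≠ j`, and the
elements of `σ` supported in `B` are exactly `{e_i + e_j}`. -/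
def IsSigma2 {x : ℕ} (σ : Finset (Fin x → ℕ)) (B : Set (Fin x)) : Prop :=
  ∃ i j : Fin x, i ≠ j ∧ B = {i, j} ∧
    {a ∈ (σ : Set (Fin x → ℕ)) | SuppIn a B} = {Pi.single i 1 + Pi.single j 1}

/-- `Cmat m x` = `c_{m,x}`. -/
noncomputable def Cmat (m x : ℕ) : ℕ :=
  Nat.card {F : Finset (Fin x → ℕ) //
    IsFerrers F ∧ mu x ⊆ F ∧ F.card = m + x + 1 ∧ rdim F = x}

/-- `Dmat m x` = `d_{m,x}`. -/
noncomputable def Dmat (m x : ℕ) : ℕ :=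
  Nat.card {F : Finset (Fin x → ℕ) //
    IsFerrers F ∧ mu x ⊆ F ∧ F.card = m + x + 1 ∧ rdim F = x ∧
      ∀ B : Set (Fin x), IsBlock (F \ mu x) B → ¬ IsSigma2 (F \ mu x) B}

/-- A point of type 1: `e_i + e_j` for some `i ≠ j`. -/
def IsType1 {r : ℕ} (a : Fin r → ℕ) : Prop :=
  ∃ i j : Fin r, i ≠ j ∧ a = Pi.single i 1 + Pi.single j 1

/-- A point of type 2: `2·e_i` for some `i`. -/
def IsType2 {r : ℕ} (a : Fin r → ℕ) : Prop :=
  ∃ i : Fin r, a = Pi.single i 2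

/-- `Fmat n r` = `f_{n,r}`. -/
noncomputable def Fmat (n r : ℕ) : ℕ :=
  Nat.card {F : Finset (Fin r → ℕ) //
    IsFerrers F ∧ mu r ⊆ F ∧ F.card = n ∧
      ∀ B : Set (Fin r), IsBlock (F \ mu r) B →
        ∃ a ∈ F \ mu r, SuppIn a B ∧ ¬ IsType1 a}

open Finset Function

open Classical in
noncomputable def coordSupport {k : ℕ} (F : Finset (Fin k → ℕ)) : Finset (Fin k) :=
  {i | ∃ a ∈ F, a i ≠ 0}

lemma mem_coordSupport {k : ℕ} {F : Finset (Fin k → ℕ)} {i : Fin k} :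
    i ∈ coordSupport F ↔ ∃ a ∈ F, a i ≠ 0 := by
  simp [coordSupport]

lemma apply_eq_zero_of_notMem_coordSupport {k : ℕ} {F : Finset (Fin k → ℕ)} {a : Fin k → ℕ}
    (ha : a ∈ F) {i : Fin k} (hi : i ∉ coordSupport F) : a i = 0 := by
  by_contra h
  exact hi (mem_coordSupport.2 ⟨a, ha, h⟩)

namespace IsFerrers

variable {k : ℕ} {F : Finset (Fin k → ℕ)}

lemma apply_lt_card (hF : IsFerrers F) {a : Fin k → ℕ} (ha : a ∈ F) (i : Fin k) :
    a i < #F := by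
  have hsub : (range (a i + 1)).image (Pi.single i) ⊆ F := by
    intro x hx
    obtain ⟨t, ht, rfl⟩ := mem_image.1 hx
    refine hF.2 a ha _ fun j => ?_
    rcases eq_or_ne j i with rfl | h
    · simpa [Nat.lt_succ_iff] using ht
    · simp [Pi.single_eq_of_ne h]
  have := card_le_card hsub
  rw [card_image_of_injective _ (Pi.single_injective i), card_range] at this
  omega

lemma mu_subset (hF : IsFerrers F) (hs : IsStrict F) : mu k ⊆ F := by
  intro x hx
  simp only [mu, mem_insert, mem_image, mem_univ, true_and] at hx
  rcases hx with rfl | ⟨i, rfl⟩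
  · obtain ⟨a, ha⟩ := hF.1
    exact hF.2 a ha 0 fun _ => Nat.zero_le _
  · obtain ⟨a, ha, hne⟩ := hs i
    refine hF.2 a ha _ fun j => ?_
    rcases eq_or_ne j i with rfl | h
    · simpa [Nat.one_le_iff_ne_zero] using hne
    · simp [Pi.single_eq_of_ne h]

end IsFerrers

lemma finite_setOf_isFerrers_card (k n : ℕ) :
    {F : Finset (Fin k → ℕ) | IsFerrers F ∧ #F = n}.Finite := by
  refine (Fintype.piFinset fun _ : Fin k => range n).powerset.finite_toSet.subset ?_
  rintro F ⟨hF, rfl⟩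
  simp only [coe_powerset, Set.mem_preimage, Set.mem_powerset_iff, coe_subset]
  intro a ha
  simpa using hF.apply_lt_card ha

instance (k n : ℕ) (S : Finset (Fin k)) :
    Finite {F : Finset (Fin k → ℕ) // IsFerrers F ∧ #F = n ∧ coordSupport F = S} :=
  ((finite_setOf_isFerrers_card k n).subset fun _ hF => ⟨hF.1, hF.2.1⟩).to_subtype

lemma card_mu (r : ℕ) : #(mu r) = r + 1 := by
  rw [mu, card_insert_of_notMem, card_image_of_injective, card_univ, Fintype.card_fin]
  · intro i j h
    by_contra hne
    simpa [Pi.single_eq_of_ne hne] using congrFun h i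
  · simp only [mem_image, mem_univ, true_and, not_exists]
    intro i h
    simpa using congrFun h i

lemma Amat_eq_zero_of_le {n r : ℕ} (h : n ≤ r) : Amat n r = 0 := by
  rw [Amat, Nat.card_eq_zero]
  left
  constructor
  rintro ⟨F, hF, hs, rfl⟩
  have := card_le_card (hF.mu_subset hs)
  rw [card_mu] at this
  omega

section Transport

variable {r k : ℕ} {e : Fin r → Fin k}

lemma extend_comp_eq_self (he : Injective e) {a : Fin k → ℕ}
    (ha : ∀ i, i ∉ Set.range e → a i = 0) : extend e (a ∘ e) 0 = a := by
  funext i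
  by_cases hi : i ∈ Set.range e
  · obtain ⟨j, rfl⟩ := hi
    exact he.extend_apply _ _ j
  · rw [extend_apply' _ _ _ hi, ha i hi, Pi.zero_apply]

lemma extend_le_iff (he : Injective e) {b : Fin r → ℕ} {a : Fin k → ℕ} :
    (∀ i, extend e b 0 i ≤ a i) ↔ ∀ j, b j ≤ a (e j) := by
  refine ⟨fun h j => he.extend_apply b 0 j ▸ h (e j), fun h i => ?_⟩
  by_cases hi : ∃ j, e j = i
  · obtain ⟨j, rfl⟩ := hi
    simpa [he.extend_apply] using h j
  · simp [extend_apply' _ _ _ hi]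

lemma IsFerrers.image_comp {F : Finset (Fin k → ℕ)} (hF : IsFerrers F) (he : Injective e) :
    IsFerrers (F.image (· ∘ e)) := by
  refine ⟨hF.1.image _, fun _ h y hy => ?_⟩
  obtain ⟨a, ha, rfl⟩ := mem_image.1 h
  have hy' : extend e y 0 ∈ F := hF.2 a ha _ ((extend_le_iff he).2 hy)
  exact mem_image.2 ⟨_, hy', extend_comp he y 0⟩

lemma IsFerrers.image_extend {G : Finset (Fin r → ℕ)} (hG : IsFerrers G) (he : Injective e) :
    IsFerrers (G.image (extend e · 0)) := by
  refine ⟨hG.1.image _, fun _ h x hx => ?_⟩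
  obtain ⟨b, hb, rfl⟩ := mem_image.1 h
  have hx0 : ∀ i, i ∉ Set.range e → x i = 0 := fun i hi =>
    Nat.le_zero.1 ((hx i).trans_eq (by simp [extend_apply' _ _ _ hi]))
  have hxe : x ∘ e ∈ G := hG.2 b hb _ fun j => by simpa [he.extend_apply] using hx (e j)
  exact mem_image.2 ⟨_, hxe, extend_comp_eq_self he hx0⟩

lemma IsStrict.image_comp {F : Finset (Fin k → ℕ)} (hF : Set.range e ⊆ coordSupport F) :
    IsStrict (F.image (· ∘ e)) := by
  intro j
  obtain ⟨a, ha, hne⟩ := mem_coordSupport.1 (hF ⟨j, rfl⟩)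
  exact ⟨a ∘ e, mem_image_of_mem _ ha, hne⟩

lemma card_image_comp (he : Injective e) {F : Finset (Fin k → ℕ)}
    (hF : ↑(coordSupport F) ⊆ Set.range e) : #(F.image (· ∘ e)) = #F := by
  refine card_image_of_injOn fun a ha a' ha' h => ?_
  have vanish : ∀ a ∈ F, ∀ i, i ∉ Set.range e → a i = 0 := fun a ha i hi =>
    apply_eq_zero_of_notMem_coordSupport ha fun h => hi (hF h)
  rw [← extend_comp_eq_self he (vanish a ha), ← extend_comp_eq_self he (vanish a' ha')]
  exact congrArg (extend e · 0) h

lemma card_image_extend (he : Injective e) (G : Finset (Fin r → ℕ)) :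
    #(G.image (extend e · 0)) = #G :=
  card_image_of_injective _ fun b b' h => by
    simpa [extend_comp he] using congrArg (· ∘ e) h

lemma coe_coordSupport_image_extend (he : Injective e) {G : Finset (Fin r → ℕ)}
    (hG : IsStrict G) : ↑(coordSupport (G.image (extend e · 0))) = Set.range e := by
  ext i
  simp only [mem_coe, mem_coordSupport, mem_image, exists_exists_and_eq_and]
  constructor
  · rintro ⟨b, -, hne⟩
    by_contra hi
    exact hne (by simp [extend_apply' _ _ _ hi])
  · rintro ⟨j, rfl⟩
    obtain ⟨b, hb, hne⟩ := hG j
    exact ⟨b, hb, by rwa [he.extend_apply]⟩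

noncomputable def ferrersSupportEquiv (n : ℕ) (S : Finset (Fin k)) (he : Injective e)
    (hS : Set.range e = S) :
    {F : Finset (Fin k → ℕ) // IsFerrers F ∧ #F = n ∧ coordSupport F = S} ≃
      {G : Finset (Fin r → ℕ) // IsFerrers G ∧ IsStrict G ∧ #G = n} where
  toFun F := ⟨F.1.image (· ∘ e), F.2.1.image_comp he,
    IsStrict.image_comp (by rw [hS, F.2.2.2]),
    by rw [card_image_comp he (by rw [hS, F.2.2.2]), F.2.2.1]⟩
  invFun G := ⟨G.1.image (extend e · 0), G.2.1.image_extend he,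
    by rw [card_image_extend he, G.2.2.2],
    by rw [← coe_inj, coe_coordSupport_image_extend he G.2.2.1, hS]⟩
  left_inv F := by
    refine Subtype.ext ?_
    simp only [image_image]
    refine (image_congr fun a ha => ?_).trans image_id
    refine extend_comp_eq_self he fun i hi => apply_eq_zero_of_notMem_coordSupport ha ?_
    rwa [F.2.2.2, ← mem_coe, ← hS]
  right_inv G := by
    refine Subtype.ext ?_
    simp only [image_image]
    exact (image_congr fun b _ => extend_comp he b 0).trans image_id

end Transport

noncomputable def ferrersSigmaSupportEquiv (k n : ℕ) :
    {F : Finset (Fin k → ℕ) // IsFerrers F ∧ #F = n} ≃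
      Σ S : Finset (Fin k), {F : Finset (Fin k → ℕ) // IsFerrers F ∧ #F = n ∧ coordSupport F = S} where
  toFun F := ⟨coordSupport F.1, F.1, F.2.1, F.2.2, rfl⟩
  invFun F := ⟨F.2.1, F.2.2.1, F.2.2.2.1⟩
  left_inv _ := rfl
  right_inv := by rintro ⟨S, F, h₁, h₂, rfl⟩; rfl

lemma card_ferrers_eq_sum_choose_mul_Amat (k n : ℕ) :
    Nat.card {F : Finset (Fin k → ℕ) // IsFerrers F ∧ #F = n}
      = ∑ r ∈ range (k + 1), k.choose r * Amat n r := by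
  have fiber (S : Finset (Fin k)) :
      Nat.card {F : Finset (Fin k → ℕ) // IsFerrers F ∧ #F = n ∧ coordSupport F = S}
        = Amat n #S :=
    Nat.card_congr <| ferrersSupportEquiv n S (S.orderEmbOfFin rfl).injective
      (S.range_orderEmbOfFin rfl)
  rw [Nat.card_congr (ferrersSigmaSupportEquiv k n), Nat.card_sigma]
  simp only [fiber]
  rw [← powerset_univ, sum_powerset_apply_card, card_univ, Fintype.card_fin]
  rfl

lemma sum_range_succ_choose_succ_mul (d m : ℕ) (f : ℕ → ℕ) :
    ∑ r ∈ range (m + 1), (d + 1).choose r * f r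
      = ∑ r ∈ range m, d.choose r * (f r + f (r + 1)) + d.choose m * f m := by
  induction m with
  | zero => simp
  | succ m ih =>
    rw [sum_range_succ, ih, sum_range_succ, Nat.choose_succ_succ]
    ring

lemma sum_range_choose_succ_mul_of_eq_zero (d n : ℕ) {f : ℕ → ℕ} (hf : ∀ r, n ≤ r → f r = 0) :
    ∑ r ∈ range (d + 2), (d + 1).choose r * f r
      = ∑ r ∈ range n, d.choose r * (f r + f (r + 1)) := by
  have hd : ∑ r ∈ range (d + 2), (d + 1).choose r * f r
      = ∑ r ∈ range (d + n + 2), (d + 1).choose r * f r :=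
    sum_subset (range_subset_range.2 (by omega)) fun r _ hr => by
      rw [Nat.choose_eq_zero_of_lt (by simp at hr; omega), zero_mul]
  have hn : ∑ r ∈ range n, d.choose r * (f r + f (r + 1))
      = ∑ r ∈ range (d + n + 1), d.choose r * (f r + f (r + 1)) :=
    sum_subset (range_subset_range.2 (by omega)) fun r _ hr => by
      simp at hr
      rw [hf r hr, hf (r + 1) (by omega)]
      simp
  rw [hd, hn, sum_range_succ_choose_succ_mul, hf _ (by omega), mul_zero, add_zero]

theorem statement18_general (d n : ℕ) :
    numPart d n = ∑ r ∈ Finset.range n, Nat.choose d r * (Amat n r + Amat n (r + 1)) := by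
  rw [numPart, card_ferrers_eq_sum_choose_mul_Amat,
    sum_range_choose_succ_mul_of_eq_zero d n fun r => Amat_eq_zero_of_le]

/-- `p_d(n) = Σ_{r=0}^{n-1} C(d,r) · (a_{n,r} + a_{n,r+1})` for all `d ≥ 0`,
`n ≥ 1`; i.e. the `B`-triangle entries are `b_{n,r} = a_{n,r} + a_{n,r+1}`. -/
theorem statement18 (d n : ℕ) (hn : 1 ≤ n) :
    numPart d n = ∑ r ∈ Finset.range n, Nat.choose d r * (Amat n r + Amat n (r + 1)) :=
  statement18_general d n
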